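/- arXiv:1909.10845 — 3 statements merged into one kernel-verified Lean document; each statement's English description precedes it below -/
import Mathlib

section
/- Let T and S be permuting 2-uniform tolerances on a lattice L without infinite chains. If u is a split (T,S)-top (i.e., u has distinct lower T-neighbour and lower S-neighbour), u ≺ v, and (u,v) ∈ T ∪ S, then v is a split (T,S)-top. -/
def IsTolerance {L : Type*} [Lattice L] (T : L → L → Prop) : Prop :=
  (∀ x, T x x) ∧ (∀ x y, T x y → T y x) ∧
  (∀ a b c d, T a b → T c d → T (a ⊔ c) (b ⊔ d) ∧ T (a ⊓ c) (b ⊓ d))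

def IsBlock {L : Type*} [Lattice L] (T : L → L → Prop) (X : Set L) : Prop :=
  (∀ x ∈ X, ∀ y ∈ X, T x y) ∧
  ∀ Y : Set L, X ⊆ Y → (∀ x ∈ Y, ∀ y ∈ Y, T x y) → Y = X

def IsTwoUniform {L : Type*} [Lattice L] (T : L → L → Prop) : Prop :=
  IsTolerance T ∧ ∀ X : Set L, IsBlock T X → ∃ a b : L, a ≠ b ∧ X = {a, b}

def NoInfiniteChains (L : Type*) [Lattice L] : Prop :=
  ∀ C : Set L, IsChain (· ≤ ·) C → C.Finite

def Comp {L : Type*} (T S : L → L → Prop) : L → L → Prop :=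
  fun x z => ∃ y, T x y ∧ S y z

def IsLowerNbr {L : Type*} [Lattice L] (R : L → L → Prop) (v u : L) : Prop :=
  v ⋖ u ∧ IsBlock R {v, u}

def IsUpperNbr {L : Type*} [Lattice L] (R : L → L → Prop) (w u : L) : Prop :=
  u ⋖ w ∧ IsBlock R {u, w}

def IsRTop {L : Type*} [Lattice L] (R : L → L → Prop) (u : L) : Prop :=
  ∃ v, IsLowerNbr R v u

def IsRBottom {L : Type*} [Lattice L] (R : L → L → Prop) (u : L) : Prop :=
  ∃ w, IsUpperNbr R w u

def Amicable {L : Type*} [Lattice L] (T S : L → L → Prop) : Prop :=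
  (∀ u v, IsRTop T u → IsRTop S u → u ⋖ v → (T u v ∨ S u v) →
    IsRTop T v ∧ IsRTop S v) ∧
  (∀ u v, IsRBottom T u → IsRBottom S u → v ⋖ u → (T v u ∨ S v u) →
    IsRBottom T v ∧ IsRBottom S v)

def IsCongruence {L : Type*} [Lattice L] (T : L → L → Prop) : Prop :=
  Equivalence T ∧
  ∀ a b c d, T a b → T c d → T (a ⊔ c) (b ⊔ d) ∧ T (a ⊓ c) (b ⊓ d)

def IsTwoUniformCongruence {L : Type*} [Lattice L] (T : L → L → Prop) : Prop :=
  IsCongruence T ∧ ∀ x : L, ∃ a b : L, a ≠ b ∧ (∀ y, T x y ↔ y = a ∨ y = b)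


section Aux

variable {L : Type*} [Lattice L]

lemma exists_block (T : L → L → Prop) {X : Set L}
    (hX : ∀ x ∈ X, ∀ y ∈ X, T x y) :
    ∃ M, X ⊆ M ∧ IsBlock T M := by
  obtain ⟨M, hXM, hM⟩ := zorn_subset_nonempty
    {Y : Set L | ∀ x ∈ Y, ∀ y ∈ Y, T x y}
    (fun c hc hchain _ => ⟨⋃₀ c, by
      intro x hx y hy
      obtain ⟨s, hs, hxs⟩ := hx
      obtain ⟨t, ht, hyt⟩ := hy
      rcases hchain.total hs ht with h | h
      · exact hc ht x (h hxs) y hyt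
      · exact hc hs x hxs y (h hyt), fun s hs => Set.subset_sUnion_of_mem hs⟩)
    X hX
  refine ⟨M, hXM, hM.prop, fun Y hMY hY => ?_⟩
  exact le_antisymm (hM.le_of_ge hY hMY) hMY

lemma pair_eq {p q x y : L} (hx : x ∈ ({p, q} : Set L)) (hy : y ∈ ({p, q} : Set L))
    (hxy : x ≠ y) : ({x, y} : Set L) = {p, q} := by
  rcases hx with rfl | rfl <;> rcases hy with rfl | rfl
  · exact absurd rfl hxy
  · rfl
  · exact Set.pair_comm _ _
  · exact absurd rfl hxy

/-- Key lemma: for a 2-uniform tolerance, related distinct elements form a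
covering pair which is a block. -/
lemma rel_cover {T : L → L → Prop} (hT : IsTwoUniform T) {x y : L}
    (hxy : T x y) (hne : x ≠ y) :
    IsBlock T {x, y} ∧ (x ⋖ y ∨ y ⋖ x) := by
  obtain ⟨⟨hrefl, hsymm, hcompat⟩, hblocks⟩ := hT
  have hclique : ∀ p ∈ ({x, y} : Set L), ∀ q ∈ ({x, y} : Set L), T p q := by
    intro p hp q hq
    rcases hp with rfl | rfl <;> rcases hq with rfl | rfl
    · exact hrefl _
    · exact hxy
    · exact hsymm _ _ hxy
    · exact hrefl _
  obtain ⟨M, hXM, hM⟩ := exists_block T hclique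
  obtain ⟨p, q, hpq, rfl⟩ := hblocks M hM
  have hxyM : ({x, y} : Set L) = {p, q} :=
    pair_eq (hXM (Set.mem_insert _ _)) (hXM (Set.mem_insert_of_mem _ rfl)) hne
  rw [← hxyM] at hM
  refine ⟨hM, ?_⟩
  -- x and y are comparable
  have hTxj : T x (x ⊔ y) := by
    have := (hcompat x x x y (hrefl x) hxy).1
    simpa using this
  have hTyj : T y (x ⊔ y) := by
    have := (hcompat x y y y hxy (hrefl y)).1
    simp only [sup_idem] at this
    exact hsymm _ _ this
  have hj : x ⊔ y ∈ ({x, y} : Set L) := by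
    have hY : ({x, y, x ⊔ y} : Set L) = {x, y} := by
      refine hM.2 _ ?_ ?_
      · intro z hz; rcases hz with rfl | rfl
        · exact Set.mem_insert _ _
        · exact Set.mem_insert_of_mem _ (Set.mem_insert _ _)
      · intro p hp q hq
        rcases hp with rfl | rfl | rfl <;> rcases hq with rfl | rfl | rfl <;>
          first
            | exact hrefl _
            | exact hxy
            | exact hsymm _ _ hxy
            | exact hTxj
            | exact hsymm _ _ hTxj
            | exact hTyj
            | exact hsymm _ _ hTyj
    rw [← hY]; exact Set.mem_insert_of_mem _ (Set.mem_insert_of_mem _ rfl)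
  have hcomp : x ≤ y ∨ y ≤ x := by
    rcases hj with hj | hj
    · right; rw [sup_comm] at hj; exact le_of_sup_eq hj
    · left; exact le_of_sup_eq (Set.mem_singleton_iff.mp hj)
  -- no element strictly between
  have hmid : ∀ c, c ∈ ({x, y} : Set L) ∨ ¬ (T x c ∧ T c y ∧ T y c ∧ T c x) := by
    intro c
    by_cases hc : T x c ∧ T c y ∧ T y c ∧ T c x
    · left
      have hY : ({x, y, c} : Set L) = {x, y} := by
        refine hM.2 _ ?_ ?_
        · intro z hz; rcases hz with rfl | rfl
          · exact Set.mem_insert _ _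
          · exact Set.mem_insert_of_mem _ (Set.mem_insert _ _)
        · intro p hp q hq
          rcases hp with rfl | rfl | rfl <;> rcases hq with rfl | rfl | rfl <;>
            first
              | exact hrefl _
              | exact hxy
              | exact hsymm _ _ hxy
              | exact hc.1
              | exact hc.2.1
              | exact hc.2.2.1
              | exact hc.2.2.2
      rw [← hY]; exact Set.mem_insert_of_mem _ (Set.mem_insert_of_mem _ rfl)
    · right; exact hc
  rcases hcomp with hle | hle
  · left
    refine ⟨lt_of_le_of_ne hle hne, ?_⟩
    intro c hxc hcy
    have hTxc : T x c := by
      have := (hcompat x y c c hxy (hrefl c)).2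
      simpa [inf_eq_left.mpr hxc.le, inf_eq_right.mpr hcy.le] using this
    have hTcy : T c y := by
      have := (hcompat x y c c hxy (hrefl c)).1
      simpa [sup_eq_right.mpr hxc.le, sup_eq_left.mpr hcy.le] using this
    rcases hmid c with hc | hc
    · rcases hc with rfl | rfl
      · exact lt_irrefl _ hxc
      · exact lt_irrefl _ hcy
    · exact hc ⟨hTxc, hTcy, hsymm _ _ hTcy, hsymm _ _ hTxc⟩
  · right
    refine ⟨lt_of_le_of_ne hle hne.symm, ?_⟩
    intro c hyc hcx
    have hTcy : T c y := by
      have := (hcompat x y c c hxy (hrefl c)).2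
      simpa [inf_eq_right.mpr hcx.le, inf_eq_left.mpr hyc.le] using this
    have hTxc : T x c := by
      have := (hcompat x y c c hxy (hrefl c)).1
      simpa [sup_eq_left.mpr hcx.le, sup_eq_right.mpr hyc.le] using this
    rcases hmid c with hc | hc
    · rcases hc with rfl | rfl
      · exact lt_irrefl _ hcx
      · exact lt_irrefl _ hyc
    · exact hc ⟨hTxc, hTcy, hsymm _ _ hTcy, hsymm _ _ hTxc⟩

lemma rel_of_block {T : L → L → Prop} {x y : L} (h : IsBlock T {x, y}) : T x y :=
  h.1 x (Set.mem_insert _ _) y (Set.mem_insert_of_mem _ rfl)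

/-- uniqueness of the lower neighbour -/
lemma lower_unique {T : L → L → Prop} (hT : IsTwoUniform T) {a b u : L}
    (ha : IsLowerNbr T a u) (hb : IsLowerNbr T b u) : a = b := by
  by_contra hne
  have hTau : T a u := rel_of_block ha.2
  have hTbu : T b u := rel_of_block hb.2
  have hTabu : T (a ⊓ b) u := by
    have := (hT.1.2.2 a u b u hTau hTbu).2
    simpa using this
  have hlt : a ⊓ b < a := by
    rw [inf_lt_left]
    intro hab
    rcases lt_or_eq_of_le hab with h | h
    · exact (ha.1.2 h hb.1.lt).elim
    · exact hne h
  have hne2 : a ⊓ b ≠ u := (hlt.trans ha.1.lt).ne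
  rcases (rel_cover hT hTabu hne2).2 with hc | hc
  · exact hc.2 hlt ha.1.lt
  · exact (lt_asymm (hlt.trans ha.1.lt) hc.lt).elim

/-- one direction of the main theorem -/
lemma main_aux {T S : L → L → Prop} (hT : IsTwoUniform T) (hS : IsTwoUniform S)
    (hp : ∀ x z, Comp S T x z → Comp T S x z)
    {u v a b : L} (ha : IsLowerNbr T a u) (hb : IsLowerNbr S b u) (hab : a ≠ b)
    (huv : u ⋖ v) (hTuv : T u v) :
    ∃ c d : L, IsLowerNbr T c v ∧ IsLowerNbr S d v ∧ c ≠ d := by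
  have hc : IsLowerNbr T u v := ⟨huv, (rel_cover hT hTuv huv.ne).1⟩
  obtain ⟨y, hTby, hSyv⟩ := hp b v ⟨u, rel_of_block hb.2, hTuv⟩
  have hbu : b < u := hb.1.lt
  have hyv : y ≠ v := by
    rintro rfl
    rcases (rel_cover hT hTby (hbu.trans huv.lt).ne).2 with h | h
    · exact h.2 hbu huv.lt
    · exact lt_asymm (hbu.trans huv.lt) h.lt
  obtain ⟨hblk, hcov⟩ := rel_cover hS hSyv hyv
  have hycov : y ⋖ v := by
    rcases hcov with h | h
    · exact h
    · exfalso
      have hby : b ≠ y := ((hbu.trans huv.lt).trans h.lt).ne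
      rcases (rel_cover hT hTby hby).2 with h2 | h2
      · exact h2.2 hbu (huv.lt.trans h.lt)
      · exact lt_asymm ((hbu.trans huv.lt).trans h.lt) h2.lt
  have hyu : y ≠ u := by
    rintro rfl
    obtain ⟨hblk2, hcov2⟩ := rel_cover hT hTby hbu.ne
    rcases hcov2 with h2 | h2
    · exact hab (lower_unique hT ha ⟨h2, hblk2⟩)
    · exact lt_asymm hbu h2.lt
  exact ⟨u, y, hc, ⟨hycov, hblk⟩, fun h => hyu h.symm⟩

end Aux

theorem stmt6 {L : Type*} [Lattice L] (hL : NoInfiniteChains L)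
    (T S : L → L → Prop) (hT : IsTwoUniform T) (hS : IsTwoUniform S)
    (hperm : ∀ x z, Comp T S x z ↔ Comp S T x z)
    (u v a b : L) (ha : IsLowerNbr T a u) (hb : IsLowerNbr S b u) (hab : a ≠ b)
    (huv : u ⋖ v) (hTS : T u v ∨ S u v) :
    ∃ c d : L, IsLowerNbr T c v ∧ IsLowerNbr S d v ∧ c ≠ d := by
  rcases hTS with h | h
  · exact main_aux hT hS (fun x z => (hperm x z).mpr) ha hb hab huv h
  · obtain ⟨c, d, hc, hd, hcd⟩ :=
      main_aux hS hT (fun x z => (hperm x z).mp) hb ha hab.symm huv h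
    exact ⟨d, c, hd, hc, hcd.symm⟩
end

section
/- Let T and S be permuting 2-uniform tolerances on a lattice L without infinite chains. Then T and S are amicable: (A1) if u is both a T-top and an S-top, u ≺ v, and (u,v) ∈ T ∪ S, then v is both a T-top and an S-top; and (A2) if u is both a T-bottom and an S-bottom, v ≺ u, and (v,u) ∈ T ∪ S, then v is both a T-bottom and an S-bottom. -/
section Aux

variable {L : Type*} [Lattice L]

/-- Every 2-element clique extends to a block (Zorn). -/
lemma clique_block {T : L → L → Prop} (hT : IsTolerance T) {x y : L} (h : T x y) :
    ∃ X, IsBlock T X ∧ x ∈ X ∧ y ∈ X := by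
  obtain ⟨hrefl, hsym, _⟩ := hT
  set 𝒮 := {Z : Set L | ({x, y} : Set L) ⊆ Z ∧ ∀ a ∈ Z, ∀ b ∈ Z, T a b} with h𝒮
  have hxy : ({x, y} : Set L) ∈ 𝒮 := by
    refine ⟨subset_rfl, ?_⟩
    rintro a (rfl | rfl) b (rfl | rfl) <;>
      first | exact hrefl _ | assumption | exact hsym _ _ (by assumption)
  have hchainH : ∀ c ⊆ 𝒮, IsChain (· ⊆ ·) c → c.Nonempty →
      ∃ ub ∈ 𝒮, ∀ s ∈ c, s ⊆ ub := by
    rintro c hc𝒮 hchain ⟨Z₀, hZ₀⟩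
    refine ⟨⋃₀ c, ⟨?_, ?_⟩, fun s hs => Set.subset_sUnion_of_mem hs⟩
    · exact (hc𝒮 hZ₀).1.trans (Set.subset_sUnion_of_mem hZ₀)
    · rintro a ⟨Z₁, hZ₁, haZ₁⟩ b ⟨Z₂, hZ₂, hbZ₂⟩
      rcases hchain.total hZ₁ hZ₂ with h12 | h21
      · exact (hc𝒮 hZ₂).2 a (h12 haZ₁) b hbZ₂
      · exact (hc𝒮 hZ₁).2 a haZ₁ b (h21 hbZ₂)
  obtain ⟨m, hsub, hmem, hmax⟩ := zorn_subset_nonempty 𝒮 hchainH _ hxy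
  refine ⟨m, ⟨hmem.2, ?_⟩, hsub (Set.mem_insert _ _),
    hsub (Set.mem_insert_of_mem _ rfl)⟩
  intro Y hYm hYclq
  have hY : Y ∈ 𝒮 := ⟨(hmem.1.trans hYm), hYclq⟩
  exact le_antisymm (hmax hY hYm) hYm

/-- In a block `{a, b}` with `a < b`, we have `a ⋖ b` (convexity). -/
lemma block_cov {T : L → L → Prop} (hT : IsTolerance T) {a b : L}
    (hX : IsBlock T ({a, b} : Set L)) (hab : a < b) : a ⋖ b := by
  obtain ⟨hrefl, hsym, hcomp⟩ := hT
  obtain ⟨hclq, hmaxi⟩ := hX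
  have hTab : T a b := hclq a (by simp) b (by simp)
  refine ⟨hab, fun c hac hcb => ?_⟩
  have hTac : T a c := by
    have := (hcomp a b c c hTab (hrefl c)).2
    rwa [inf_eq_left.mpr hac.le, inf_eq_right.mpr hcb.le] at this
  have hTcb : T c b := by
    have := (hcomp a b c c hTab (hrefl c)).1
    rwa [sup_eq_right.mpr hac.le, sup_eq_left.mpr hcb.le] at this
  have hc : c ∈ ({a, b} : Set L) := by
    have heq := hmaxi (insert c {a, b}) (Set.subset_insert _ _) ?_
    · rw [← heq]; exact Set.mem_insert _ _
    · rintro z (rfl | rfl | rfl) w (rfl | rfl | rfl) <;>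
        first | exact hrefl _ | assumption | exact hsym _ _ (by assumption)
  rcases hc with rfl | rfl
  · exact lt_irrefl _ hac
  · exact lt_irrefl _ hcb

/-- Every block of a 2-uniform tolerance is a covering pair. -/
lemma block_shape {T : L → L → Prop} (hT : IsTwoUniform T) {X : Set L}
    (hX : IsBlock T X) : ∃ a b : L, a ⋖ b ∧ X = {a, b} := by
  obtain ⟨hTol, h2⟩ := hT
  obtain ⟨hrefl, hsym, hcomp⟩ := hTol
  obtain ⟨a, b, hab, hXeq⟩ := h2 X hX
  subst hXeq
  obtain ⟨hclq, hmaxi⟩ := hX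
  have hTab : T a b := hclq a (by simp) b (by simp)
  -- a ⊔ b ∈ {a, b}
  have hTasup : T a (a ⊔ b) := by
    have := (hcomp a a a b (hrefl a) hTab).1
    rwa [sup_idem] at this
  have hTbsup : T b (a ⊔ b) := by
    have := (hcomp b a b b (hsym _ _ hTab) (hrefl b)).1
    rwa [sup_idem] at this
  have hsup : a ⊔ b ∈ ({a, b} : Set L) := by
    have heq := hmaxi (insert (a ⊔ b) {a, b}) (Set.subset_insert _ _) ?_
    · rw [← heq]; exact Set.mem_insert _ _
    · rintro z (rfl | rfl | rfl) w (rfl | rfl | rfl) <;>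
        first | exact hrefl _ | assumption | exact hsym _ _ (by assumption)
  rcases hsup with hs | hs
  · -- a ⊔ b = a, so b < a
    have hba : b < a := lt_of_le_of_ne (by rw [← hs]; exact le_sup_right) (Ne.symm hab)
    refine ⟨b, a, block_cov ⟨hrefl, hsym, hcomp⟩ ?_ hba, Set.pair_comm a b⟩
    rw [← Set.pair_comm a b]; exact ⟨hclq, hmaxi⟩
  · -- a ⊔ b = b, so a < b
    have hab' : a < b := lt_of_le_of_ne (by rw [← hs]; exact le_sup_left) hab
    exact ⟨a, b, block_cov ⟨hrefl, hsym, hcomp⟩ ⟨hclq, hmaxi⟩ hab', rfl⟩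

/-- Any two distinct related elements form a block which is a covering pair. -/
lemma pair_block {T : L → L → Prop} (hT : IsTwoUniform T) {x y : L}
    (hxy : T x y) (hne : x ≠ y) :
    (x ⋖ y ∧ IsBlock T {x, y}) ∨ (y ⋖ x ∧ IsBlock T {y, x}) := by
  obtain ⟨X, hX, hxX, hyX⟩ := clique_block hT.1 hxy
  obtain ⟨a, b, hab, hXeq⟩ := block_shape hT hX
  subst hXeq
  rcases hxX with rfl | rfl
  · rcases hyX with rfl | rfl
    · exact absurd rfl hne
    · exact Or.inl ⟨hab, hX⟩
  · rcases hyX with rfl | rfl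
    · exact Or.inr ⟨hab, hX⟩
    · exact absurd rfl hne

lemma top_step {T S : L → L → Prop} (hT : IsTwoUniform T) (hS : IsTwoUniform S)
    (hperm : ∀ x z, Comp S T x z → Comp T S x z)
    {u v : L} (hSu : IsRTop S u) (hcov : u ⋖ v) (huv : T u v) :
    IsRTop T v ∧ IsRTop S v := by
  have hne : u ≠ v := hcov.lt.ne
  constructor
  · rcases pair_block hT huv hne with ⟨h1, h2⟩ | ⟨h1, _⟩
    · exact ⟨u, h1, h2⟩
    · exact absurd h1.lt hcov.lt.asymm
  · obtain ⟨w, hwu, hwblk⟩ := hSu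
    have hSwu : S w u := hwblk.1 w (by simp) u (by simp)
    obtain ⟨m, hTwm, hSmv⟩ := hperm w v ⟨u, hSwu, huv⟩
    have hwv : w < v := hwu.lt.trans hcov.lt
    have hmv : m ≠ v := by
      rintro rfl
      rcases pair_block hT hTwm hwv.ne with ⟨h1, _⟩ | ⟨h1, _⟩
      · exact h1.2 hwu.lt hcov.lt
      · exact absurd h1.lt hwv.asymm
    rcases pair_block hS hSmv hmv with ⟨h1, h2⟩ | ⟨h1, _⟩
    · exact ⟨m, h1, h2⟩
    · have hwm : w < m := hwv.trans h1.lt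
      rcases pair_block hT hTwm hwm.ne with ⟨h3, _⟩ | ⟨h3, _⟩
      · exact absurd (hcov.lt.trans h1.lt) (h3.2 hwu.lt)
      · exact absurd h3.lt hwm.asymm

lemma bot_step {T S : L → L → Prop} (hT : IsTwoUniform T) (hS : IsTwoUniform S)
    (hperm : ∀ x z, Comp T S x z → Comp S T x z)
    {u v : L} (hSu : IsRBottom S u) (hcov : v ⋖ u) (hvu : T v u) :
    IsRBottom T v ∧ IsRBottom S v := by
  have hne : v ≠ u := hcov.lt.ne
  constructor
  · rcases pair_block hT hvu hne with ⟨h1, h2⟩ | ⟨h1, _⟩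
    · exact ⟨u, h1, h2⟩
    · exact absurd h1.lt hcov.lt.asymm
  · obtain ⟨w, huw, hwblk⟩ := hSu
    have hSuw : S u w := hwblk.1 u (by simp) w (by simp)
    obtain ⟨m, hSvm, hTmw⟩ := hperm v w ⟨u, hvu, hSuw⟩
    have hvw : v < w := hcov.lt.trans huw.lt
    have hmv : v ≠ m := by
      rintro rfl
      rcases pair_block hT hTmw hvw.ne with ⟨h1, _⟩ | ⟨h1, _⟩
      · exact h1.2 hcov.lt huw.lt
      · exact absurd h1.lt hvw.asymm
    rcases pair_block hS hSvm hmv with ⟨h1, h2⟩ | ⟨h1, _⟩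
    · exact ⟨m, h1, h2⟩
    · have hmw : m < w := h1.lt.trans hvw
      rcases pair_block hT hTmw hmw.ne with ⟨h3, _⟩ | ⟨h3, _⟩
      · exact absurd hvw (h3.2 h1.lt)
      · exact absurd h3.lt hmw.asymm

end Aux

theorem stmt10 {L : Type*} [Lattice L] (hL : NoInfiniteChains L)
    (T S : L → L → Prop) (hT : IsTwoUniform T) (hS : IsTwoUniform S)
    (hperm : ∀ x z, Comp T S x z ↔ Comp S T x z) :
    Amicable T S := by
  constructor
  · intro u v hTu hSu hcov h
    rcases h with h | h
    · exact top_step hT hS (fun x z => (hperm x z).mpr) hSu hcov h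
    · have := top_step hS hT (fun x z => (hperm x z).mp) hTu hcov h
      exact ⟨this.2, this.1⟩
  · intro u v hTu hSu hcov h
    rcases h with h | h
    · exact bot_step hT hS (fun x z => (hperm x z).mp) hSu hcov h
    · have := bot_step hS hT (fun x z => (hperm x z).mpr) hTu hcov h
      exact ⟨this.2, this.1⟩
end

section
/- Let T be a 2-uniform tolerance on a lattice L without infinite chains. If u is not a T-bottom (no w ≻ u with {u,w} a T-block exists), then u is a T-top: there exists v ≺ u such that {v,u} is a T-block. -/
/-- Every nonempty set has a minimal element when there are no infinite chains. -/
lemma exists_min_of_noInfiniteChains {L : Type*} [Lattice L] (hL : NoInfiniteChains L)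
    (S : Set L) (hS : S.Nonempty) : ∃ w ∈ S, ∀ z ∈ S, ¬ z < w := by
  by_contra hcon
  push_neg at hcon
  obtain ⟨s0, hs0⟩ := hS
  have hstep : ∀ x : S, ∃ y : S, (y : L) < x := by
    rintro ⟨x, hx⟩
    obtain ⟨z, hz, hzx⟩ := hcon x hx
    exact ⟨⟨z, hz⟩, hzx⟩
  choose f hf using hstep
  let g : ℕ → S := fun n => f^[n] ⟨s0, hs0⟩
  have hg : ∀ n, (g (n + 1) : L) < g n := by
    intro n
    have : g (n + 1) = f (g n) := Function.iterate_succ_apply' f n _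
    rw [this]
    exact hf (g n)
  have hanti : StrictAnti fun n => (g n : L) := strictAnti_nat_of_succ_lt hg
  have hchain : IsChain (· ≤ ·) (Set.range fun n => (g n : L)) := by
    rintro _ ⟨m, rfl⟩ _ ⟨n, rfl⟩ _
    rcases lt_trichotomy m n with h | h | h
    · exact Or.inr (hanti h).le
    · exact Or.inl (by rw [h])
    · exact Or.inl (hanti h).le
  exact (Set.infinite_range_of_injective hanti.injective) (hL _ hchain)

/-- Dual: every nonempty set has a maximal element. -/
lemma exists_max_of_noInfiniteChains {L : Type*} [Lattice L] (hL : NoInfiniteChains L)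
    (S : Set L) (hS : S.Nonempty) : ∃ w ∈ S, ∀ z ∈ S, ¬ w < z := by
  by_contra hcon
  push_neg at hcon
  obtain ⟨s0, hs0⟩ := hS
  have hstep : ∀ x : S, ∃ y : S, (x : L) < y := by
    rintro ⟨x, hx⟩
    obtain ⟨z, hz, hzx⟩ := hcon x hx
    exact ⟨⟨z, hz⟩, hzx⟩
  choose f hf using hstep
  let g : ℕ → S := fun n => f^[n] ⟨s0, hs0⟩
  have hg : ∀ n, (g n : L) < g (n + 1) := by
    intro n
    have : g (n + 1) = f (g n) := Function.iterate_succ_apply' f n _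
    rw [this]
    exact hf (g n)
  have hmono : StrictMono fun n => (g n : L) := strictMono_nat_of_lt_succ hg
  have hchain : IsChain (· ≤ ·) (Set.range fun n => (g n : L)) := by
    rintro _ ⟨m, rfl⟩ _ ⟨n, rfl⟩ _
    rcases lt_trichotomy m n with h | h | h
    · exact Or.inl (hmono h).le
    · exact Or.inl (by rw [h])
    · exact Or.inr (hmono h).le
  exact (Set.infinite_range_of_injective hmono.injective) (hL _ hchain)

/-- Every clique extends to a block. -/
lemma exists_block_superset {L : Type*} [Lattice L] {T : L → L → Prop}
    (C : Set L) (hC : ∀ x ∈ C, ∀ y ∈ C, T x y) :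
    ∃ X, C ⊆ X ∧ IsBlock T X := by
  have hzorn : ∀ c ⊆ {Y : Set L | ∀ x ∈ Y, ∀ y ∈ Y, T x y}, IsChain (· ⊆ ·) c →
      c.Nonempty → ∃ ub ∈ {Y : Set L | ∀ x ∈ Y, ∀ y ∈ Y, T x y}, ∀ s ∈ c, s ⊆ ub := by
    intro c hcS hc hne
    refine ⟨⋃₀ c, ?_, fun s hs => Set.subset_sUnion_of_mem hs⟩
    rintro x ⟨s, hs, hxs⟩ y ⟨t, ht, hyt⟩
    rcases hc.total hs ht with hst | hts
    · exact hcS ht x (hst hxs) y hyt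
    · exact hcS hs x hxs y (hts hyt)
  obtain ⟨m, hCm, hm⟩ := zorn_subset_nonempty _ hzorn C hC
  refine ⟨m, hCm, hm.prop, ?_⟩
  intro Y hmY hY
  exact subset_antisymm (hm.le_of_ge hY hmY) hmY

/-- A pair with `T u w`, `u ≠ w` is itself a block (for 2-uniform `T`). -/
lemma pair_block_s19 {L : Type*} [Lattice L] {T : L → L → Prop}
    (hT : IsTwoUniform T) {u w : L} (hne : u ≠ w) (huw : T u w) :
    IsBlock T {u, w} := by
  obtain ⟨⟨hrefl, hsymm, _⟩, h2⟩ := hT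
  have hclique : ∀ x ∈ ({u, w} : Set L), ∀ y ∈ ({u, w} : Set L), T x y := by
    rintro x (rfl | rfl) y (rfl | rfl)
    · exact hrefl _
    · exact huw
    · exact hsymm _ _ huw
    · exact hrefl _
  obtain ⟨X, hsub, hX⟩ := exists_block_superset _ hclique
  obtain ⟨a, b, hab, rfl⟩ := h2 X hX
  have hu : u ∈ ({a, b} : Set L) := hsub (by simp)
  have hw : w ∈ ({a, b} : Set L) := hsub (by simp)
  have : ({u, w} : Set L) = {a, b} := by
    rcases hu with rfl | rfl <;> rcases hw with rfl | rfl
    · exact absurd rfl hne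
    · rfl
    · exact Set.pair_comm _ _
    · exact absurd rfl hne
  rwa [this]

/-- Every element has a strictly comparable `T`-relative. -/
lemma exists_comparable_rel {L : Type*} [Lattice L] {T : L → L → Prop}
    (hT : IsTwoUniform T) (u : L) : ∃ z, (u < z ∨ z < u) ∧ T u z := by
  obtain ⟨⟨hrefl, hsymm, hcomp⟩, h2⟩ := hT
  obtain ⟨X, hsub, hX⟩ := exists_block_superset {u} (by rintro x rfl y rfl; exact hrefl _)
  obtain ⟨a, b, hab, rfl⟩ := h2 X hX
  -- a and b are comparable: a ⊔ b belongs to the block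
  have hTab : T a b := hX.1 a (by simp) b (by simp)
  have hTba : T b a := hsymm _ _ hTab
  have h1 : T (a ⊔ b) a := by
    have := (hcomp a a b a (hrefl a) hTba).1
    simpa using this
  have h2' : T (a ⊔ b) b := by
    have := (hcomp a b b b hTab (hrefl b)).1
    simpa using this
  have hjoin : a ⊔ b ∈ ({a, b} : Set L) := by
    have hins : ∀ x ∈ insert (a ⊔ b) ({a, b} : Set L),
        ∀ y ∈ insert (a ⊔ b) ({a, b} : Set L), T x y := by
      rintro x (rfl | hx) y (rfl | hy)
      · exact hrefl _
      · rcases hy with rfl | rfl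
        · exact h1
        · exact h2'
      · rcases hx with rfl | rfl
        · exact hsymm _ _ h1
        · exact hsymm _ _ h2'
      · exact hX.1 x hx y hy
    have := hX.2 _ (Set.subset_insert _ _) hins
    rw [← this]; exact Set.mem_insert _ _
  have hord : a < b ∨ b < a := by
    rcases hjoin with hj | hj
    · exact Or.inr (lt_of_le_of_ne (le_sup_right.trans hj.le) (Ne.symm hab))
    · exact Or.inl (lt_of_le_of_ne (le_sup_left.trans hj.le) hab)
  have hu : u ∈ ({a, b} : Set L) := hsub rfl
  rcases hu with rfl | rfl
  · exact ⟨b, by tauto, hTab⟩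
  · exact ⟨a, by tauto, hsymm _ _ hTab⟩

theorem stmt19 {L : Type*} [Lattice L] (hL : NoInfiniteChains L)
    (T : L → L → Prop) (hT : IsTwoUniform T) (u : L)
    (h : ¬ IsRBottom T u) : IsRTop T u := by
  obtain ⟨z, hz, hTuz⟩ := exists_comparable_rel hT u
  obtain ⟨⟨hrefl, hsymm, hcomp⟩, h2⟩ := hT
  rcases hz with huz | hzu
  · -- u < z : u is a T-bottom, contradiction
    exfalso
    apply h
    obtain ⟨w, ⟨huw, hwz⟩, hmin⟩ :=
      exists_min_of_noInfiniteChains hL {x | u < x ∧ x ≤ z} ⟨z, huz, le_rfl⟩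
    have hcov : u ⋖ w := by
      refine ⟨huw, fun c huc hcw => ?_⟩
      exact hmin c ⟨huc, hcw.le.trans hwz⟩ hcw
    have hTuw : T u w := by
      have := (hcomp u z w w hTuz (hrefl w)).2
      rwa [inf_eq_left.mpr huw.le, inf_eq_right.mpr hwz] at this
    exact ⟨w, hcov, pair_block_s19 ⟨⟨hrefl, hsymm, hcomp⟩, h2⟩ huw.ne hTuw⟩
  · -- z < u : u is a T-top
    obtain ⟨v, ⟨hzv, hvu⟩, hmax⟩ :=
      exists_max_of_noInfiniteChains hL {x | z ≤ x ∧ x < u} ⟨z, le_rfl, hzu⟩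
    have hcov : v ⋖ u := by
      refine ⟨hvu, fun c hvc hcu => ?_⟩
      exact hmax c ⟨hzv.trans hvc.le, hcu⟩ hvc
    have hTvu : T v u := by
      have := (hcomp u z v v hTuz (hrefl v)).1
      rw [sup_eq_left.mpr hvu.le, sup_eq_right.mpr hzv] at this
      exact hsymm _ _ this
    exact ⟨v, hcov, pair_block_s19 ⟨⟨hrefl, hsymm, hcomp⟩, h2⟩ hvu.ne hTvu⟩
end
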